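/- arXiv:1911.04461 — 5 statements merged into one kernel-verified Lean document; each statement's English description precedes it below -/
import Mathlib

section
/- Let V and W be finite types, let D be a natural number, and let N : V → Finset W be a neighborhood map such that (i) every v ∈ V satisfies D ≤ (N v).card, and (ii) any two distinct v, v' ∈ V satisfy ((N v) ∩ (N v')).card ≤ 1. Then every A : Finset V with 16 · A.card ≤ D satisfies 16 · ((A.biUnion N).card) ≥ 15 · D · A.card (i.e. the union of the neighborhoods of A has size at least (15/16) · D · |A|). -/
/-- **Unique-neighbor expansion.** In a bipartite incidence structure where every left
vertex `v` has at least `D` right neighbors `N v`, and any two distinct left vertices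
share at most one right neighbor, any left set `A` with `16·|A| ≤ D` satisfies
`16·|⋃_{v∈A} N v| ≥ 15·D·|A|`. -/
theorem unique_neighbor_expansion {V W : Type*} [Fintype V] [Fintype W] [DecidableEq V]
    [DecidableEq W] (D : ℕ) (N : V → Finset W)
    (hdeg : ∀ v : V, D ≤ (N v).card)
    (hint : ∀ v v' : V, v ≠ v' → ((N v) ∩ (N v')).card ≤ 1) :
    ∀ A : Finset V, 16 * A.card ≤ D → 16 * (A.biUnion N).card ≥ 15 * D * A.card := by
  -- Key lemma: D * |A| ≤ |⋃ N v| + |A|²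
  have key : ∀ A : Finset V, D * A.card ≤ (A.biUnion N).card + A.card * A.card := by
    intro A
    induction A using Finset.induction_on with
    | empty => simp
    | @insert a A ha ih =>
      rw [Finset.biUnion_insert]
      have hinter : (N a ∩ A.biUnion N).card ≤ A.card := by
        have : N a ∩ A.biUnion N = A.biUnion (fun v => N a ∩ N v) := by
          ext x; simp [Finset.mem_biUnion]; tauto
        rw [this]
        calc (A.biUnion fun v => N a ∩ N v).card
            ≤ ∑ v ∈ A, (N a ∩ N v).card := Finset.card_biUnion_le
          _ ≤ ∑ v ∈ A, 1 := Finset.sum_le_sum (fun v hv =>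
              hint a v (fun h => ha (h ▸ hv)))
          _ = A.card := by simp
      have hunion := Finset.card_union_add_card_inter (N a) (A.biUnion N)
      have h1 : (N a).card + (A.biUnion N).card ≤ (N a ∪ A.biUnion N).card + A.card := by
        omega
      have hd := hdeg a
      rw [Finset.card_insert_of_notMem ha]
      nlinarith [ih, hd, h1]
  intro A hA
  have h := key A
  nlinarith [h, hA, Nat.zero_le A.card]
end

section
/- Let n be an even natural number, p = n/2, and let A be a finite set of (p−1)-faces of the n-dimensional Boolean cube with |A| ≤ n/32. Then the upper shadow of A satisfies |∂⁺A| ≥ |A| · (n/2 + 1) · (15/16). -/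
/-- A point of the cube complex: a word in `{0,1,*}^n`, where `*` is `none`. -/
abbrev Cube (n : ℕ) := Fin n → Option Bool

/-- `f` is a `p`-face of the `n`-cube: exactly `p` coordinates are `*` (i.e. `none`). -/
def IsFace (n p : ℕ) (f : Cube n) : Prop :=
  (Finset.univ.filter (fun i => f i = none)).card = p

/-- The upper shadow of a set of faces: all faces obtained from an element by
replacing one non-`*` coordinate with `*`. -/
def upperShadow {n : ℕ} (A : Finset (Cube n)) : Finset (Cube n) :=
  A.biUnion (fun f =>
    (Finset.univ.filter (fun i => f i ≠ none)).image (fun i => Function.update f i none))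

/-- The lower shadow of a set of faces: all faces obtained from an element by
replacing one `*` coordinate with either `0` or `1`. -/
def lowerShadow {n : ℕ} (A : Finset (Cube n)) : Finset (Cube n) :=
  A.biUnion (fun f =>
    ((Finset.univ ×ˢ (Finset.univ : Finset Bool)).filter (fun q : Fin n × Bool => f q.1 = none)).image
      (fun q : Fin n × Bool => Function.update f q.1 (some q.2)))

/-!
Each `(p-1)`-face has `n - (p-1) = n/2 + 1` cofaces, and two distinct faces have at most one
common coface, namely their join. Writing `d(g)` for the number of faces of `A` below `g`,
double counting the incidences between `A` and `∂⁺A` gives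
`|A| (n/2 + 1) = ∑_{g ∈ ∂⁺A} d(g) ≤ |∂⁺A| + ∑_g d(g) (d(g) - 1) ≤ |∂⁺A| + |A|²`,
since an ordered pair of distinct faces lies below at most one `g`. Finally `|A| ≤ n/32` gives
`16 |A|² ≤ |A| (n/2 + 1)`.
-/

open Finset

namespace Finset

variable {α β : Type*} {s : Finset α} {t : Finset β} {r : α → β → Prop}
  [∀ a b, Decidable (r a b)]

theorem sum_card_offDiag_bipartiteBelow_le
    (h : ∀ a ∈ s, ∀ a' ∈ s, a ≠ a' → #{b ∈ t | r a b ∧ r a' b} ≤ 1) :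
    ∑ b ∈ t, #(s.bipartiteBelow r b).offDiag ≤ #s.offDiag := by
  have hpairs : ∀ b, (s.bipartiteBelow r b).offDiag = s.offDiag.bipartiteAbove
      (fun b x => r x.1 b ∧ r x.2 b) b := by
    intro b; ext x; simp only [mem_offDiag, mem_bipartiteBelow, mem_bipartiteAbove]; tauto
  simp_rw [hpairs]
  rw [sum_card_bipartiteAbove_eq_sum_card_bipartiteBelow]
  refine (sum_le_card_nsmul _ _ 1 fun x hx => ?_).trans (by simp)
  obtain ⟨ha, ha', hne⟩ := mem_offDiag.mp hx
  exact h _ ha _ ha' hne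

theorem sum_card_bipartiteBelow_le_card_add_sq
    (h : ∀ a ∈ s, ∀ a' ∈ s, a ≠ a' → #{b ∈ t | r a b ∧ r a' b} ≤ 1) :
    ∑ b ∈ t, #(s.bipartiteBelow r b) ≤ #t + #s * #s := by
  have hcount : ∀ b, #(s.bipartiteBelow r b) ≤ 1 + #(s.bipartiteBelow r b).offDiag := by
    intro b
    rw [offDiag_card]
    have := Nat.sub_add_cancel (Nat.le_mul_self #(s.bipartiteBelow r b))
    nlinarith
  calc ∑ b ∈ t, #(s.bipartiteBelow r b)
      ≤ ∑ b ∈ t, (1 + #(s.bipartiteBelow r b).offDiag) := sum_le_sum fun b _ => hcount b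
    _ = #t + ∑ b ∈ t, #(s.bipartiteBelow r b).offDiag := by simp [sum_add_distrib]
    _ ≤ #t + #s * #s := by
      grw [sum_card_offDiag_bipartiteBelow_le h, offDiag_card]
      omega

end Finset

variable {n : ℕ}

def cofaces (f : Cube n) : Finset (Cube n) :=
  (univ.filter fun i => f i ≠ none).image fun i => Function.update f i none

theorem upperShadow_eq_biUnion_cofaces (A : Finset (Cube n)) :
    upperShadow A = A.biUnion cofaces := rfl

theorem mem_cofaces {f g : Cube n} :
    g ∈ cofaces f ↔ ∃ i, f i ≠ none ∧ Function.update f i none = g := by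
  simp [cofaces]

theorem card_cofaces {q : ℕ} {f : Cube n} (hf : IsFace n q f) : #(cofaces f) = n - q := by
  have hinj : Set.InjOn (Function.update f · none) (univ.filter fun i => f i ≠ none) := by
    intro i hi j _ hij
    by_contra hne
    have := congrFun hij i
    simp only [Function.update_self, Function.update_of_ne hne] at this
    exact (mem_filter.mp hi).2 this.symm
  rw [cofaces, card_image_of_injOn hinj, ← hf]
  have := card_filter_add_card_filter_not (s := univ) (fun i => f i = none)
  simp only [card_univ, Fintype.card_fin] at this
  simp only [ne_eq]
  omega

theorem eq_join_of_mem_cofaces {f f' g : Cube n} (hne : f ≠ f') (hg : g ∈ cofaces f)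
    (hg' : g ∈ cofaces f') : g = fun k => if f k = f' k then f k else none := by
  obtain ⟨i, hfi, rfl⟩ := mem_cofaces.mp hg
  obtain ⟨j, -, hj⟩ := mem_cofaces.mp hg'
  have hagree : ∀ k, k ≠ i → k ≠ j → f k = f' k := fun k hki hkj => by
    simpa [Function.update_of_ne hki, Function.update_of_ne hkj] using (congrFun hj k).symm
  funext k
  split_ifs with hk
  · rcases eq_or_ne k i with rfl | hki
    · exfalso
      rcases eq_or_ne k j with rfl | hkj
      · exact hne (funext fun m => if hm : m = k then hm ▸ hk else hagree m hm hm)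
      · exact hfi (hk.trans (by simpa [Function.update_of_ne hkj] using congrFun hj k))
    · exact Function.update_of_ne hki _ _
  · rcases eq_or_ne k i with rfl | hki
    · exact Function.update_self ..
    · rcases eq_or_ne k j with rfl | hkj
      · rw [← hj, Function.update_self]
      · exact absurd (hagree k hki hkj) hk

theorem card_common_cofaces_le_one {f f' : Cube n} (hne : f ≠ f') (t : Finset (Cube n)) :
    #{g ∈ t | g ∈ cofaces f ∧ g ∈ cofaces f'} ≤ 1 :=
  card_le_one.mpr fun g hg g' hg' => by
    rw [eq_join_of_mem_cofaces hne (mem_filter.mp hg).2.1 (mem_filter.mp hg).2.2,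
      eq_join_of_mem_cofaces hne (mem_filter.mp hg').2.1 (mem_filter.mp hg').2.2]

theorem card_mul_le_card_upperShadow_add_sq {A : Finset (Cube n)} {d : ℕ}
    (hd : ∀ f ∈ A, d ≤ #(cofaces f)) : #A * d ≤ #(upperShadow A) + #A * #A := by
  have habove : ∀ f ∈ A, (upperShadow A).bipartiteAbove (fun f g => g ∈ cofaces f) f = cofaces f :=
    fun f hf => by
      rw [bipartiteAbove, filter_mem_eq_inter, inter_eq_right, upperShadow_eq_biUnion_cofaces]
      exact subset_biUnion_of_mem cofaces hf
  calc #A * d = ∑ _f ∈ A, d := by simp [mul_comm]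
    _ ≤ ∑ f ∈ A, #(cofaces f) := sum_le_sum hd
    _ = ∑ f ∈ A, #((upperShadow A).bipartiteAbove (fun f g => g ∈ cofaces f) f) :=
      sum_congr rfl fun f hf => by rw [habove f hf]
    _ = ∑ g ∈ upperShadow A, #(A.bipartiteBelow (fun f g => g ∈ cofaces f) g) :=
      sum_card_bipartiteAbove_eq_sum_card_bipartiteBelow _
    _ ≤ #(upperShadow A) + #A * #A :=
      sum_card_bipartiteBelow_le_card_add_sq fun f _ f' _ hne =>
        card_common_cofaces_le_one hne _

theorem upperShadow_expansion_general (n : ℕ) (p : ℕ) (hp : p = n / 2)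
    (A : Finset (Cube n)) (hA : ∀ f ∈ A, IsFace n (p - 1) f)
    (hcard : A.card ≤ n / 32) :
    16 * (upperShadow A).card ≥ 15 * (A.card * (n / 2 + 1)) := by
  have hdeg : ∀ f ∈ A, n / 2 + 1 ≤ #(cofaces f) := fun f hf => by
    -- `A ≠ ∅` forces `n ≥ 32`, so `p - 1` does not truncate.
    have := card_pos.mpr ⟨f, hf⟩
    rw [card_cofaces (hA f hf)]
    omega
  have hexp := card_mul_le_card_upperShadow_add_sq hdeg
  have hsmall : 16 * (#A * #A) ≤ #A * (n / 2 + 1) :=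
    calc 16 * (#A * #A) = #A * (16 * #A) := by ring
      _ ≤ #A * (n / 2 + 1) := Nat.mul_le_mul_left _ (by omega)
  omega

/-- **Upper-shadow expansion for small sets of `(p-1)`-faces, `p = n/2`.**
For even `n`, `p = n/2`, a set `A` of `(p-1)`-faces of the `n`-cube with `|A| ≤ n/32`
satisfies `|∂⁺A| ≥ |A| · (n/2 + 1) · (15/16)`. -/
theorem upperShadow_expansion (n : ℕ) (hn : Even n) (p : ℕ) (hp : p = n / 2)
    (A : Finset (Cube n)) (hA : ∀ f ∈ A, IsFace n (p - 1) f)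
    (hcard : A.card ≤ n / 32) :
    16 * (upperShadow A).card ≥ 15 * (A.card * (n / 2 + 1)) :=
  upperShadow_expansion_general n p hp A hA hcard
end

section
/- Let n be an even natural number, p = n/2, and let A be a finite set of (p+1)-faces of the n-dimensional Boolean cube with |A| ≤ n/16. Then the lower shadow of A satisfies |∂⁻A| ≥ 2 · |A| · (n/2 + 1) · (15/16). -/
/-!
Each `(p+1)`-face has `2(p+1)` lower faces, and two distinct faces share at most one lower
face. The second-order Bonferroni inequality then gives
`|∂⁻A| ≥ 2(p+1)|A| - (|A| choose 2)`, and the loss `(|A| choose 2) ≤ |A|²/2` is at most a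
sixteenth of `2(p+1)|A|` as soon as `8|A| ≤ p`.
-/

open Finset Function

theorem Finset.card_mul_le_card_biUnion_add_choose_two_mul {ι α : Type*} [DecidableEq ι]
    [DecidableEq α] (s : Finset ι) (S : ι → Finset α) {k m : ℕ}
    (hk : ∀ i ∈ s, k ≤ #(S i)) (hm : ∀ i ∈ s, ∀ j ∈ s, i ≠ j → #(S i ∩ S j) ≤ m) :
    #s * k ≤ #(s.biUnion S) + (#s).choose 2 * m := by
  induction s using Finset.induction_on with
  | empty => simp
  | insert j s hj ih =>
    have ih' := ih (fun i hi => hk i (mem_insert_of_mem hi))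
      (fun i hi i' hi' => hm i (mem_insert_of_mem hi) i' (mem_insert_of_mem hi'))
    have hinter : #(S j ∩ s.biUnion S) ≤ #s * m := by
      rw [inter_biUnion]
      exact card_biUnion_le_card_mul _ _ _ fun i hi =>
        hm j (mem_insert_self j s) i (mem_insert_of_mem hi) (ne_of_mem_of_not_mem hi hj).symm
    have hunion := card_union_add_card_inter (S j) (s.biUnion S)
    have hkj := hk j (mem_insert_self j s)
    rw [biUnion_insert, card_insert_of_notMem hj, Nat.choose_succ_succ', Nat.choose_one_right]
    linarith [add_mul #s ((#s).choose 2) m, add_mul #s 1 k]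

namespace Cube

variable {n : ℕ}

def lowerFaces (f : Cube n) : Finset (Cube n) :=
  ((univ ×ˢ (univ : Finset Bool)).filter (fun q : Fin n × Bool => f q.1 = none)).image
    (fun q : Fin n × Bool => update f q.1 (some q.2))

theorem lowerShadow_eq_biUnion_lowerFaces (A : Finset (Cube n)) :
    lowerShadow A = A.biUnion lowerFaces :=
  rfl

theorem mem_lowerFaces {f g : Cube n} :
    g ∈ lowerFaces f ↔ ∃ i b, f i = none ∧ update f i (some b) = g := by
  simp [lowerFaces]

theorem card_lowerFaces {p : ℕ} {f : Cube n} (hf : IsFace n p f) :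
    #(lowerFaces f) = 2 * p := by
  have hfilter : (univ ×ˢ (univ : Finset Bool)).filter (fun q : Fin n × Bool => f q.1 = none)
      = univ.filter (fun i => f i = none) ×ˢ univ := by
    ext; simp
  rw [lowerFaces, card_image_of_injOn, hfilter, card_product, hf, card_univ, Fintype.card_bool,
    mul_comm]
  rintro ⟨i, b⟩ hi ⟨i', b'⟩ - h
  have hfi : f i = none := by simpa using hi
  have hat_i := congrFun h i
  by_cases hii' : i = i'
  · subst hii'
    simpa using hat_i
  · simp [update_of_ne hii', hfi] at hat_i

/-- A common lower face of two distinct faces takes the non-`*` values of both of them. -/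
theorem eq_or_of_mem_lowerFaces_inter {f f' g : Cube n} (hne : f ≠ f')
    (hg : g ∈ lowerFaces f ∩ lowerFaces f') : g = fun k => (f k).or (f' k) := by
  rw [mem_inter, mem_lowerFaces, mem_lowerFaces] at hg
  obtain ⟨⟨i, b, hfi, rfl⟩, ⟨j, c, hf'j, hg'⟩⟩ := hg
  have hij : i ≠ j := by
    rintro rfl
    refine hne (funext fun k => ?_)
    by_cases hki : k = i
    · rw [hki, hfi, hf'j]
    · simpa [update_of_ne hki] using (congrFun hg' k).symm
  funext k
  have hk := congrFun hg' k
  by_cases hki : k = i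
  · subst hki
    simp_all
  · by_cases hkj : k = j
    · subst hkj
      simp_all
    · cases hfk : f k <;> simp_all

theorem card_lowerFaces_inter_le_one {f f' : Cube n} (hne : f ≠ f') :
    #(lowerFaces f ∩ lowerFaces f') ≤ 1 :=
  card_le_one.2 fun _ hg _ hg' =>
    (eq_or_of_mem_lowerFaces_inter hne hg).trans (eq_or_of_mem_lowerFaces_inter hne hg').symm

end Cube

theorem lowerShadow_expansion_general (n : ℕ) (p : ℕ) (hp : p = n / 2)
    (A : Finset (Cube n)) (hA : ∀ f ∈ A, IsFace n (p + 1) f)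
    (hcard : A.card ≤ n / 16) :
    16 * (lowerShadow A).card ≥ 15 * (2 * (A.card * (n / 2 + 1))) := by
  have hbonferroni := A.card_mul_le_card_biUnion_add_choose_two_mul Cube.lowerFaces
    (fun f hf => (Cube.card_lowerFaces (hA f hf)).ge)
    (fun _ _ _ _ hne => Cube.card_lowerFaces_inter_le_one hne)
  rw [← Cube.lowerShadow_eq_biUnion_lowerFaces] at hbonferroni
  have hpairs : 2 * (#A).choose 2 ≤ #A * #A := by
    rw [Nat.choose_two_right]
    exact (Nat.mul_div_le _ 2).trans (Nat.mul_le_mul_left _ (Nat.sub_le _ 1))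
  have hsmall : 8 * #A ≤ p := by omega
  rw [← hp]
  nlinarith [Nat.mul_le_mul_left (#A) hsmall]

/-- **Lower-shadow expansion for small sets of `(p+1)`-faces, `p = n/2`.**
For even `n`, `p = n/2`, a set `A` of `(p+1)`-faces of the `n`-cube with `|A| ≤ n/16`
satisfies `|∂⁻A| ≥ 2 · |A| · (n/2 + 1) · (15/16)`. -/
theorem lowerShadow_expansion (n : ℕ) (hn : Even n) (p : ℕ) (hp : p = n / 2)
    (A : Finset (Cube n)) (hA : ∀ f ∈ A, IsFace n (p + 1) f)
    (hcard : A.card ≤ n / 16) :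
    16 * (lowerShadow A).card ≥ 15 * (2 * (A.card * (n / 2 + 1))) :=
  lowerShadow_expansion_general n p hp A hA hcard
end

section
/- Let N be an even natural number, p = N/2, and let E be a finite complement-closed set of p-faces of the N-dimensional Boolean cube with |E| ≤ N/32. Then the number of complementation-orbits of faces in the upper shadow ∂⁺E is at least (|E|/2) · (N/2) · (15/16), and the number of complementation-orbits of faces in the lower shadow ∂⁻E is at least (|E|/2) · N · (15/16). Equivalently, in the projective N-cube (the quotient of faces by the antipodal identification), a set Ẽ of projective p-faces with |Ẽ| ≤ N/64 has at least |Ẽ|·(N/2)·(15/16) projective faces in its upper shadow and at least |Ẽ|·N·(15/16) projective faces in its lower shadow. -/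
/-- The complement of a face: flip every non-`*` coordinate, keep `*` coordinates. -/
def faceCompl {n : ℕ} (f : Cube n) : Cube n :=
  fun i => Option.map (fun b => !b) (f i)

/-- The number of complementation-orbits `{f, f̄}` meeting a set `S` of faces. -/
def orbitCount {n : ℕ} (S : Finset (Cube n)) : ℕ :=
  (S.image (fun f => ({f, faceCompl f} : Finset (Cube n)))).card


attribute [local instance] Classical.propDecidable

/-- `g` is obtained from `h` by replacing one non-`*` coordinate with `*`. -/
def Cov {n : ℕ} (h g : Cube n) : Prop :=
  ∃ i, h i ≠ none ∧ g i = none ∧ ∀ j, j ≠ i → g j = h j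

/-- Two distinct faces have at most one common cover. -/
lemma cov_unique_upper {n : ℕ} {f f' g g' : Cube n} (hne : f ≠ f')
    (h1 : Cov f g) (h2 : Cov f' g) (h3 : Cov f g') (h4 : Cov f' g') : g = g' := by
  obtain ⟨i, hfi, hgi, hi⟩ := h1
  obtain ⟨i', hf'i, hgi', hi'⟩ := h2
  obtain ⟨j, hfj, hg'j, hj⟩ := h3
  obtain ⟨j', hf'j, hg'j', hj'⟩ := h4
  by_cases hii : i = i'
  · subst hii
    have hagree : ∀ x, x ≠ i → f x = f' x := fun x hx => by
      rw [← hi x hx, hi' x hx]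
    by_cases hji : j = i
    · subst hji
      funext x
      by_cases hx : x = j
      · subst hx; rw [hgi, hg'j]
      · rw [hi x hx, hj x hx]
    · exfalso
      have hfj' : f j = f' j := hagree j hji
      have hjj' : j = j' := by
        by_contra hne2
        have h5 : g' j = f' j := hj' j hne2
        rw [hg'j, ← hfj'] at h5
        exact hfj h5.symm
      subst hjj'
      apply hne
      funext x
      by_cases hx : x = j
      · subst hx; exact hfj'
      · rw [← hj x hx, hj' x hx]
  · -- i ≠ i' : f,f' differ exactly at i and i'
    have hf'iN : f' i = none := by rw [← hi' i hii, hgi]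
    have hfi'N : f i' = none := by rw [← hi i' (Ne.symm hii), hgi']
    have hji : j = i := by
      by_contra hne2
      have hjne : j ≠ i' := fun h => hfj (h ▸ hfi'N)
      have hf'jv : f' j = f j := by rw [← hi j hne2, hi' j hjne]
      have hjj' : j = j' := by
        by_contra hne3
        have h5 : g' j = f' j := hj' j hne3
        rw [hg'j, hf'jv] at h5
        exact hfj h5.symm
      subst hjj'
      -- g' agrees with f off j and with f' off j, but f i ≠ f' i with i ≠ j
      have hine : i ≠ j := Ne.symm hne2
      have e1 : g' i = f i := hj i hine
      have e2 : g' i = f' i := hj' i hine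
      rw [hf'iN] at e2
      exact hfi (e1 ▸ e2 ▸ rfl)
    have hji' : j' = i' := by
      by_contra hne2
      have hjne : j' ≠ i := fun h => hf'j (h ▸ hf'iN)
      have h5 : g' j' = f j' := hj j' (by rw [hji]; exact hjne)
      have h6 : f j' = f' j' := by rw [← hi j' hjne, hi' j' hne2]
      rw [hg'j'] at h5
      exact hf'j (h6 ▸ h5.symm)
    subst hji
    funext x
    by_cases hx : x = j
    · subst hx; rw [hgi, hg'j]
    · rw [hi x hx, hj x hx]

/-- Two distinct faces have at most one common lower face. -/
lemma cov_unique_lower {n : ℕ} {f f' h h' : Cube n} (hne : f ≠ f')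
    (h1 : Cov h f) (h2 : Cov h f') (h3 : Cov h' f) (h4 : Cov h' f') : h = h' := by
  obtain ⟨i, hhi, hfi, hi⟩ := h1
  obtain ⟨i', hhi', hf'i, hi'⟩ := h2
  obtain ⟨j, hh'j, hfj, hj⟩ := h3
  obtain ⟨j', hh'j', hf'j, hj'⟩ := h4
  have hii : i ≠ i' := by
    rintro rfl
    apply hne
    funext x
    by_cases hx : x = i
    · subst hx; rw [hfi, hf'i]
    · rw [hi x hx, hi' x hx]
  have hjj : j ≠ j' := by
    rintro rfl
    apply hne
    funext x
    by_cases hx : x = j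
    · subst hx; rw [hfj, hf'j]
    · rw [hj x hx, hj' x hx]
  -- f is none at i and non-none at i'; f' none at i', non-none at i
  have hfi' : f i' ≠ none := by rw [hi i' (Ne.symm hii)]; exact hhi'
  have hf'iv : f' i ≠ none := by rw [hi' i hii]; exact hhi
  have hfj' : f j' ≠ none := by rw [hj j' (Ne.symm hjj)]; exact hh'j'
  have hf'jv : f' j ≠ none := by rw [hj' j hjj]; exact hh'j
  have hji : j = i := by
    by_contra hne2
    have hjne : j ≠ i' := fun h => hfi' (h ▸ hfj)
    exact hf'jv (by rw [hi' j hjne, ← hi j hne2]; exact hfj)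
  have hji' : j' = i' := by
    by_contra hne2
    have hjne : j' ≠ i := fun h => hf'iv (h ▸ hf'j)
    exact hfj' (by rw [hi j' hjne, ← hi' j' hne2]; exact hf'j)
  subst hji; subst hji'
  funext x
  by_cases hx : x = j
  · subst hx
    rw [← hi' x hii, hj' x hii]
  · rw [← hi x hx, hj x hx]

open Finset in
lemma count_lemma {α β : Type*} (E : Finset α) (T : Finset β)
    (R : α → β → Prop) (k : ℕ)
    (hdeg : ∀ f ∈ E, k ≤ (T.filter (fun g => R f g)).card)
    (huniq : ∀ f ∈ E, ∀ f' ∈ E, f ≠ f' → ∀ g g', R f g → R f' g → R f g' → R f' g' → g = g') :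
    E.card * k ≤ T.card + (E.card * E.card - E.card) := by
  classical
  have step1 : E.card * k ≤ ∑ f ∈ E, (T.filter (fun g => R f g)).card := by
    calc E.card * k = ∑ _f ∈ E, k := by simp [mul_comm]
    _ ≤ _ := Finset.sum_le_sum hdeg
  have swap1 : ∑ f ∈ E, (T.filter (fun g => R f g)).card
      = ∑ g ∈ T, (E.filter (fun f => R f g)).card := by
    simp only [Finset.card_filter]
    exact Finset.sum_comm
  have key : ∀ m : ℕ, m ≤ 1 + (m * m - m) := by
    intro m
    rcases m with _ | m
    · simp
    · have h1 : (m + 1) * (m + 1) - (m + 1) = (m + 1) * m := by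
        have hh : (m + 1) * (m + 1) = (m + 1) * m + (m + 1) := by ring
        omega
      rw [h1]
      have h2 : m ≤ (m + 1) * m := Nat.le_mul_of_pos_left m (Nat.succ_pos m)
      omega
  have step2 : ∀ g, (E.filter (fun f => R f g)).card
      ≤ 1 + (E.offDiag.filter (fun q => R q.1 g ∧ R q.2 g)).card := by
    intro g
    have hod : (E.filter (fun f => R f g)).offDiag
        = E.offDiag.filter (fun q => R q.1 g ∧ R q.2 g) := by
      ext q
      simp only [Finset.mem_offDiag, Finset.mem_filter]
      tauto
    have := key (E.filter (fun f => R f g)).card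
    rw [← Finset.offDiag_card, hod] at this
    exact this
  have swap2 : ∑ g ∈ T, (E.offDiag.filter (fun q => R q.1 g ∧ R q.2 g)).card
      = ∑ q ∈ E.offDiag, (T.filter (fun g => R q.1 g ∧ R q.2 g)).card := by
    simp only [Finset.card_filter]
    exact Finset.sum_comm
  have step3 : ∀ q ∈ E.offDiag, (T.filter (fun g => R q.1 g ∧ R q.2 g)).card ≤ 1 := by
    intro q hq
    rw [Finset.mem_offDiag] at hq
    apply Finset.card_le_one.mpr
    intro a ha b hb
    rw [Finset.mem_filter] at ha hb
    exact huniq q.1 hq.1 q.2 hq.2.1 hq.2.2 a b ha.2.1 ha.2.2 hb.2.1 hb.2.2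
  calc E.card * k ≤ ∑ g ∈ T, (E.filter (fun f => R f g)).card := by rw [← swap1]; exact step1
  _ ≤ ∑ g ∈ T, (1 + (E.offDiag.filter (fun q => R q.1 g ∧ R q.2 g)).card) :=
      Finset.sum_le_sum (fun g _ => step2 g)
  _ = T.card + ∑ g ∈ T, (E.offDiag.filter (fun q => R q.1 g ∧ R q.2 g)).card := by
      rw [Finset.sum_add_distrib]; simp
  _ = T.card + ∑ q ∈ E.offDiag, (T.filter (fun g => R q.1 g ∧ R q.2 g)).card := by rw [swap2]
  _ ≤ T.card + ∑ _q ∈ E.offDiag, 1 := by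
      exact Nat.add_le_add_left (Finset.sum_le_sum step3) _
  _ = T.card + E.offDiag.card := by simp
  _ = T.card + (E.card * E.card - E.card) := by rw [Finset.offDiag_card]

open Finset Function in
lemma upper_deg {N p : ℕ} (hN : Even N) (hp : p = N / 2) {E : Finset (Cube N)} {f : Cube N}
    (hf : f ∈ E) (hface : IsFace N p f) :
    p ≤ ((upperShadow E).filter (fun g => Cov f g)).card := by
  classical
  set s := (Finset.univ.filter (fun i => f i ≠ none)).image (fun i => Function.update f i none)
    with hs
  have hsub : s ⊆ (upperShadow E).filter (fun g => Cov f g) := by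
    intro g hg
    rw [hs, Finset.mem_image] at hg
    obtain ⟨i, hi, rfl⟩ := hg
    rw [Finset.mem_filter] at hi
    have hi' : f i ≠ none := hi.2
    refine Finset.mem_filter.mpr ⟨?_, ?_⟩
    · refine Finset.mem_biUnion.mpr ⟨f, hf, Finset.mem_image.mpr ⟨i, ?_, rfl⟩⟩
      simp [hi']
    · exact ⟨i, hi', by simp, fun j hj => Function.update_of_ne hj _ _⟩
  have hinj : Set.InjOn (fun i => Function.update f i none)
      ↑(Finset.univ.filter (fun i => f i ≠ none)) := by
    intro a ha b hb hab
    simp only [Finset.coe_filter, Set.mem_setOf_eq] at ha hb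
    by_contra hne
    have h0 := congrFun hab a
    simp only [Function.update_self, Function.update_of_ne hne] at h0
    exact ha.2 h0.symm
  have hcard : s.card = N - p := by
    rw [hs, Finset.card_image_of_injOn hinj]
    have htot := Finset.card_filter_add_card_filter_not
      (s := (Finset.univ : Finset (Fin N))) (p := fun i => f i = none)
    have hface' := hface
    unfold IsFace at hface'
    have huniv : (Finset.univ : Finset (Fin N)).card = N := by simp
    have hx : (Finset.univ.filter (fun i => f i ≠ none))
        = (Finset.univ.filter (fun i => ¬ f i = none)) := rfl
    rw [hx]
    omega
  have hNp : p ≤ N - p := by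
    obtain ⟨m, rfl⟩ := hN
    omega
  calc p ≤ N - p := hNp
  _ = s.card := hcard.symm
  _ ≤ _ := Finset.card_le_card hsub

open Finset Function in
lemma lower_deg {N p : ℕ} (hN : Even N) (hp : p = N / 2) {E : Finset (Cube N)} {f : Cube N}
    (hf : f ∈ E) (hface : IsFace N p f) :
    N ≤ ((lowerShadow E).filter (fun h => Cov h f)).card := by
  classical
  set t := ((Finset.univ ×ˢ (Finset.univ : Finset Bool)).filter
      (fun q : Fin N × Bool => f q.1 = none)) with ht
  set s := t.image (fun q : Fin N × Bool => Function.update f q.1 (some q.2)) with hs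
  have hsub : s ⊆ (lowerShadow E).filter (fun h => Cov h f) := by
    intro h hh
    rw [hs, Finset.mem_image] at hh
    obtain ⟨q, hq, rfl⟩ := hh
    rw [ht, Finset.mem_filter] at hq
    refine Finset.mem_filter.mpr ⟨?_, ?_⟩
    · exact Finset.mem_biUnion.mpr ⟨f, hf,
        Finset.mem_image.mpr ⟨q, Finset.mem_filter.mpr hq, rfl⟩⟩
    · refine ⟨q.1, by simp, hq.2, fun j hj => (Function.update_of_ne hj _ _).symm⟩
  have hinj : Set.InjOn (fun q : Fin N × Bool => Function.update f q.1 (some q.2)) ↑t := by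
    intro a ha b hb hab
    rw [ht] at ha hb
    simp only [Finset.coe_filter, Set.mem_setOf_eq] at ha hb
    by_cases h1 : a.1 = b.1
    · have h0 := congrFun hab a.1
      simp only [Function.update_self] at h0
      rw [h1, Function.update_self] at h0
      have h2 : a.2 = b.2 := by injection h0
      exact Prod.ext h1 h2
    · exfalso
      have h0 := congrFun hab a.1
      simp only [Function.update_self, Function.update_of_ne h1] at h0
      rw [ha.2] at h0
      exact Option.some_ne_none _ h0
  have hteq : t = (Finset.univ.filter (fun i => f i = none)) ×ˢ (Finset.univ : Finset Bool) := by
    rw [ht]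
    ext q
    simp [Finset.mem_filter, Finset.mem_product]
  have hcard : s.card = p * 2 := by
    rw [hs, Finset.card_image_of_injOn hinj, hteq, Finset.card_product]
    unfold IsFace at hface
    simp [hface]
  have hNp : N = p * 2 := by
    obtain ⟨m, rfl⟩ := hN
    omega
  calc N = p * 2 := hNp
  _ = s.card := hcard.symm
  _ ≤ _ := Finset.card_le_card hsub

lemma card_le_two_mul_orbitCount {n : ℕ} (S : Finset (Cube n)) :
    S.card ≤ 2 * orbitCount S := by
  classical
  unfold orbitCount
  apply Finset.card_le_mul_card_image
  intro b hb
  rw [Finset.mem_image] at hb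
  obtain ⟨f0, _, rfl⟩ := hb
  have hsub : (S.filter (fun x => ({x, faceCompl x} : Finset (Cube n))
      = ({f0, faceCompl f0} : Finset (Cube n)))) ⊆ ({f0, faceCompl f0} : Finset (Cube n)) := by
    intro x hx
    rw [Finset.mem_filter] at hx
    have : x ∈ ({x, faceCompl x} : Finset (Cube n)) := Finset.mem_insert_self _ _
    rwa [hx.2] at this
  calc _ ≤ ({f0, faceCompl f0} : Finset (Cube n)).card := Finset.card_le_card hsub
  _ ≤ _ := Finset.card_insert_le _ _ |>.trans (by simp)

/-- **Isoperimetric inequality for the projective hypercube.**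
For even `N`, `p = N/2`, and a complement-closed set `E` of `p`-faces of the `N`-cube
with `|E| ≤ N/32`, the number of complementation-orbits in the upper shadow `∂⁺E` is
at least `(|E|/2) · (N/2) · (15/16)`, and the number of complementation-orbits in the
lower shadow `∂⁻E` is at least `(|E|/2) · N · (15/16)`.  (Equivalently, a set `Ẽ` of
projective `p`-faces with `|Ẽ| ≤ N/64` has at least `|Ẽ|·(N/2)·(15/16)` projective
faces in its upper shadow and at least `|Ẽ|·N·(15/16)` projective faces in its lower
shadow.) -/
theorem projective_shadow_expansion (N : ℕ) (hN : Even N) (p : ℕ) (hp : p = N / 2)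
    (E : Finset (Cube N)) (hE : ∀ f ∈ E, IsFace N p f)
    (hclosed : ∀ f ∈ E, faceCompl f ∈ E)
    (hcard : E.card ≤ N / 32) :
    32 * orbitCount (upperShadow E) ≥ 15 * (E.card * (N / 2)) ∧
    32 * orbitCount (lowerShadow E) ≥ 15 * (E.card * N) := by
  classical
  have hNc := hN
  obtain ⟨m, hm⟩ := hNc
  have h16 : 16 * E.card ≤ p := by omega
  constructor
  · -- upper shadow
    have hcount := count_lemma E (upperShadow E) (fun f g => Cov f g) p
      (fun f hf => upper_deg hN hp hf (hE f hf))
      (fun f hf f' hf' hne g g' h1 h2 h3 h4 => cov_unique_upper hne h1 h2 h3 h4)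
    have horb := card_le_two_mul_orbitCount (upperShadow E)
    set c := E.card
    set T := (upperShadow E).card
    set ob := orbitCount (upperShadow E)
    have h1 : c * p ≤ T + c * c := by
      have : c * c - c ≤ c * c := Nat.sub_le _ _
      omega
    have h2 : 16 * (c * p) ≤ 32 * ob + 16 * c * c := by
      calc 16 * (c * p) ≤ 16 * (T + c * c) := Nat.mul_le_mul_left _ h1
      _ = 16 * T + 16 * c * c := by ring
      _ ≤ 16 * (2 * ob) + 16 * c * c := by
          exact Nat.add_le_add_right (Nat.mul_le_mul_left _ horb) _
      _ = 32 * ob + 16 * c * c := by ring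
    have h3 : 16 * c * c ≤ p * c := Nat.mul_le_mul_right c h16
    have h4 : 15 * (c * p) + c * p ≤ 32 * ob + c * p := by
      calc 15 * (c * p) + c * p = 16 * (c * p) := by ring
      _ ≤ 32 * ob + 16 * c * c := h2
      _ ≤ 32 * ob + p * c := Nat.add_le_add_left h3 _
      _ = 32 * ob + c * p := by ring
    have h5 : 15 * (c * p) ≤ 32 * ob := Nat.le_of_add_le_add_right h4
    rw [← hp]
    exact h5
  · -- lower shadow
    have hcount := count_lemma E (lowerShadow E) (fun f h => Cov h f) N
      (fun f hf => lower_deg hN hp hf (hE f hf))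
      (fun f hf f' hf' hne g g' h1 h2 h3 h4 => cov_unique_lower hne h1 h2 h3 h4)
    have horb := card_le_two_mul_orbitCount (lowerShadow E)
    set c := E.card
    set T := (lowerShadow E).card
    set ob := orbitCount (lowerShadow E)
    have h1 : c * N ≤ T + c * c := by
      have : c * c - c ≤ c * c := Nat.sub_le _ _
      omega
    have hpN : p ≤ N := by omega
    have h16' : 16 * c ≤ N := le_trans h16 hpN
    have h2 : 16 * (c * N) ≤ 32 * ob + 16 * c * c := by
      calc 16 * (c * N) ≤ 16 * (T + c * c) := Nat.mul_le_mul_left _ h1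
      _ = 16 * T + 16 * c * c := by ring
      _ ≤ 16 * (2 * ob) + 16 * c * c := by
          exact Nat.add_le_add_right (Nat.mul_le_mul_left _ horb) _
      _ = 32 * ob + 16 * c * c := by ring
    have h3 : 16 * c * c ≤ N * c := Nat.mul_le_mul_right c h16'
    have h4 : 15 * (c * N) + c * N ≤ 32 * ob + c * N := by
      calc 15 * (c * N) + c * N = 16 * (c * N) := by ring
      _ ≤ 32 * ob + 16 * c * c := h2
      _ ≤ 32 * ob + N * c := Nat.add_le_add_left h3 _
      _ = 32 * ob + c * N := by ring
    exact Nat.le_of_add_le_add_right h4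
end

section
/- For all real numbers α and b with 0 < α ≤ 1/8 and b ≥ 5·ln(1/α), one has 2·α + binEntropy(α) − b·α ≤ −2·α·ln(1/α). -/
/-!
With `L = ln(1/α)`, the entropy is at most `αL + α` (the `1 - α` term contributes at most `α`,
since `-x ln x ≤ 1 - x`), so the left side is at most `3α - 4αL`; and `L ≥ ln 8 > 3/2`.
-/

open Real

theorem binEntropy_le_mul_log_one_div_add_self {p : ℝ} (hp : p ≤ 1) :
    binEntropy p ≤ p * log (1 / p) + p := by
  have hq : negMulLog (1 - p) ≤ p := by
    simpa using negMulLog_le_one_sub_self (sub_nonneg.mpr hp)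
  rw [binEntropy_eq_negMulLog_add_negMulLog_one_sub, negMulLog, one_div, log_inv]
  linarith

theorem three_halves_le_log_one_div {α : ℝ} (h0 : 0 < α) (h1 : α ≤ 1 / 8) :
    3 / 2 ≤ log (1 / α) := by
  have h8 : log 8 ≤ log (1 / α) :=
    log_le_log (by norm_num) (by rw [le_div_iff₀ h0]; linarith)
  have hlog8 : log 8 = 3 * log 2 := by
    rw [show (8 : ℝ) = 2 ^ 3 by norm_num, log_pow]; norm_num
  linarith [log_two_gt_d9]

/-- **Exponent inequality for the truncated Metropolis–Hastings tail bound.**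
For `0 < α ≤ 1/8` and `b ≥ 5·ln(1/α)`, `2·α + binEntropy(α) − b·α ≤ −2·α·ln(1/α)`. -/
theorem gibbs_tail_exponent (α b : ℝ) (h0 : 0 < α) (h1 : α ≤ 1 / 8)
    (hb : b ≥ 5 * Real.log (1 / α)) :
    2 * α + Real.binEntropy α - b * α ≤ -(2 * α * Real.log (1 / α)) := by
  set L := log (1 / α)
  have hH : binEntropy α ≤ α * L + α := binEntropy_le_mul_log_one_div_add_self (by linarith)
  have hbα : 5 * L * α ≤ b * α := mul_le_mul_of_nonneg_right hb h0.le
  have hL : 3 / 2 * α ≤ L * α :=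
    mul_le_mul_of_nonneg_right (three_halves_le_log_one_div h0 h1) h0.le
  linarith
end
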